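/- Let Ω_1 < … < Ω_r be positive reals, and let f(x) = a_0 + Σ_{k=1}^r (a_k cos(Ω_k x) + b_k sin(Ω_k x)) with real coefficients. Let d be an even positive integer, let x_0,x_1,…,x_r ∈ ℝ be such that the (r+1)×(r+1) matrix A with first column all ones and A_{i,k} = cos(Ω_k x_i) is invertible, and let c ∈ ℝ^{r+1} solve Aᵀ c = q where q_0 = 0 and q_k = (-1)^{d/2} Ω_k^d for k ≥ 1. Then for every x̄ ∈ ℝ, f^{(d)}(x̄) = (1/2)·Σ_{i=0}^r c_i·(f(x̄ + x_i) + f(x̄ - x_i)). -/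

import Mathlib

/-!
Each mode `a cos (ω x) + b sin (ω x)` is an eigenfunction of `d/dx^d` with eigenvalue
`(-1)^(d/2) ω^d`, and the constant term is killed by differentiation. On the other side,
the sum-to-product formulas give `g (y + t) + g (y - t) = 2 cos (ω t) g y` for every mode `g`,
so the symmetric stencil with weights `c` multiplies the constant term by `∑ i, c i` and the
`k`-th mode by `∑ i, cos (Ω k * x i) * c i`. These are exactly the entries of `Aᵀ c`, which are
prescribed to be `0` and the eigenvalues.
-/

open Real Finset Matrix

noncomputable section

variable {ι : Type*} [Fintype ι]

def trigPoly (a₀ : ℝ) (ω a b : ι → ℝ) (x : ℝ) : ℝ :=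
  a₀ + ∑ k, (a k * cos (ω k * x) + b k * sin (ω k * x))

theorem iteratedDeriv_two_mul_cos_mul (ω : ℝ) (m : ℕ) :
    iteratedDeriv (2 * m) (fun x => cos (ω * x)) =
      fun x => (-1) ^ m * ω ^ (2 * m) * cos (ω * x) := by
  rw [iteratedDeriv_comp_const_mul contDiff_cos, iteratedDeriv_even_cos]
  ext x
  simp only [Pi.mul_apply, Pi.pow_apply, Pi.neg_apply, Pi.one_apply]
  ring

theorem iteratedDeriv_two_mul_sin_mul (ω : ℝ) (m : ℕ) :
    iteratedDeriv (2 * m) (fun x => sin (ω * x)) =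
      fun x => (-1) ^ m * ω ^ (2 * m) * sin (ω * x) := by
  rw [iteratedDeriv_comp_const_mul contDiff_sin, iteratedDeriv_even_sin]
  ext x
  simp only [Pi.mul_apply, Pi.pow_apply, Pi.neg_apply, Pi.one_apply]
  ring

theorem iteratedDeriv_two_mul_cos_add_sin (ω a b : ℝ) (m : ℕ) (y : ℝ) :
    iteratedDeriv (2 * m) (fun x => a * cos (ω * x) + b * sin (ω * x)) y =
      (-1) ^ m * ω ^ (2 * m) * (a * cos (ω * y) + b * sin (ω * y)) := by
  rw [iteratedDeriv_fun_add (by fun_prop) (by fun_prop),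
    iteratedDeriv_const_mul_field, iteratedDeriv_const_mul_field,
    iteratedDeriv_two_mul_cos_mul, iteratedDeriv_two_mul_sin_mul]
  ring

theorem iteratedDeriv_two_mul_trigPoly (a₀ : ℝ) (ω a b : ι → ℝ) {m : ℕ} (hm : 0 < m)
    (y : ℝ) :
    iteratedDeriv (2 * m) (trigPoly a₀ ω a b) y =
      ∑ k, (-1) ^ m * ω k ^ (2 * m) * (a k * cos (ω k * y) + b k * sin (ω k * y)) := by
  unfold trigPoly
  rw [iteratedDeriv_const_add (by omega), iteratedDeriv_fun_sum fun k _ => by fun_prop]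
  exact sum_congr rfl fun k _ => iteratedDeriv_two_mul_cos_add_sin _ _ _ m y

theorem cos_add_sin_add_add_sub (ω a b y t : ℝ) :
    (a * cos (ω * (y + t)) + b * sin (ω * (y + t))) +
        (a * cos (ω * (y - t)) + b * sin (ω * (y - t))) =
      2 * cos (ω * t) * (a * cos (ω * y) + b * sin (ω * y)) := by
  rw [mul_add, mul_sub, cos_add, cos_sub, sin_add, sin_sub]
  ring

theorem trigPoly_add_add_sub (a₀ : ℝ) (ω a b : ι → ℝ) (y t : ℝ) :
    trigPoly a₀ ω a b (y + t) + trigPoly a₀ ω a b (y - t) =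
      2 * (a₀ + ∑ k, cos (ω k * t) * (a k * cos (ω k * y) + b k * sin (ω k * y))) := by
  simp only [trigPoly]
  rw [add_add_add_comm, ← sum_add_distrib]
  simp only [cos_add_sin_add_add_sub, mul_assoc, ← mul_sum]
  ring

theorem half_sum_mul_trigPoly_add_add_sub {κ : Type*} [Fintype κ] (a₀ : ℝ)
    (ω a b : ι → ℝ) (c t : κ → ℝ) (y : ℝ) :
    1 / 2 * ∑ i, c i * (trigPoly a₀ ω a b (y + t i) + trigPoly a₀ ω a b (y - t i)) =
      a₀ * ∑ i, c i +
        ∑ k, (∑ i, cos (ω k * t i) * c i) * (a k * cos (ω k * y) + b k * sin (ω k * y)) := by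
  calc 1 / 2 * ∑ i, c i * (trigPoly a₀ ω a b (y + t i) + trigPoly a₀ ω a b (y - t i))
      = ∑ i, (a₀ * c i +
          c i * ∑ k, cos (ω k * t i) * (a k * cos (ω k * y) + b k * sin (ω k * y))) := by
        rw [mul_sum]
        exact sum_congr rfl fun i _ => by rw [trigPoly_add_add_sub]; ring
    _ = _ := by
        rw [sum_add_distrib, ← mul_sum, add_right_inj]
        simp only [mul_sum, sum_mul]
        rw [sum_comm]
        exact sum_congr rfl fun k _ => sum_congr rfl fun i _ => by ring

end

theorem epsr_even_general (r : ℕ) (Ω : Fin r → ℝ)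
    (a0 : ℝ) (a b : Fin r → ℝ) (f : ℝ → ℝ)
    (hf : ∀ x, f x = a0 + ∑ k, (a k * Real.cos (Ω k * x) + b k * Real.sin (Ω k * x)))
    (d : ℕ) (hd : Even d) (hdpos : 0 < d)
    (x : Fin (r + 1) → ℝ) (A : Matrix (Fin (r + 1)) (Fin (r + 1)) ℝ)
    (hA : ∀ i, A i = Fin.cons 1 (fun k => Real.cos (Ω k * x i)))
    (c : Fin (r + 1) → ℝ)
    (hc : Aᵀ.mulVec c = Fin.cons 0 (fun k => (-1 : ℝ) ^ (d / 2) * Ω k ^ d)) :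
    ∀ xbar : ℝ, iteratedDeriv d f xbar =
      (1 / 2) * ∑ i, c i * (f (xbar + x i) + f (xbar - x i)) := by
  intro xbar
  obtain ⟨m, rfl⟩ : ∃ m, d = 2 * m := hd.exists_two_nsmul _
  have hc0 : ∑ i, c i = 0 := by
    simpa [mulVec, transpose, dotProduct, hA] using congrFun hc 0
  have hck : ∀ k, ∑ i, cos (Ω k * x i) * c i = (-1) ^ m * Ω k ^ (2 * m) := fun k => by
    simpa [mulVec, transpose, dotProduct, hA] using congrFun hc k.succ
  rw [show f = trigPoly a0 Ω a b from funext hf,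
    iteratedDeriv_two_mul_trigPoly _ _ _ _ (by omega), half_sum_mul_trigPoly_add_add_sub, hc0,
    mul_zero, zero_add]
  simp only [hck]

theorem epsr_even (r : ℕ) (hr : 0 < r) (Ω : Fin r → ℝ)
    (hΩpos : ∀ k, 0 < Ω k) (hΩmono : StrictMono Ω)
    (a0 : ℝ) (a b : Fin r → ℝ) (f : ℝ → ℝ)
    (hf : ∀ x, f x = a0 + ∑ k, (a k * Real.cos (Ω k * x) + b k * Real.sin (Ω k * x)))
    (d : ℕ) (hd : Even d) (hdpos : 0 < d)
    (x : Fin (r + 1) → ℝ) (A : Matrix (Fin (r + 1)) (Fin (r + 1)) ℝ)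
    (hA : ∀ i, A i = Fin.cons 1 (fun k => Real.cos (Ω k * x i)))
    (hinv : IsUnit A)
    (c : Fin (r + 1) → ℝ)
    (hc : Aᵀ.mulVec c = Fin.cons 0 (fun k => (-1 : ℝ) ^ (d / 2) * Ω k ^ d)) :
    ∀ xbar : ℝ, iteratedDeriv d f xbar =
      (1 / 2) * ∑ i, c i * (f (xbar + x i) + f (xbar - x i)) :=
  epsr_even_general r Ω a0 a b f hf d hd hdpos x A hA c hc
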